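/- Let F = (X; f₁,…,f_N) and G = (Y; g₁,…,g_N) be point-fibred IFSs on compact Hausdorff spaces X and Y with attractors A_F, A_G and coding maps π_F, π_G : I^∞ → A_F, A_G respectively, let τ_F : A_F → Ω_F be a section of π_F, and let T_FG = π_G ∘ τ_F : A_F → A_G be the associated fractal transformation. If for all σ, ω in the closure of Ω_F in I^∞, π_F(σ) = π_F(ω) implies π_G(σ) = π_G(ω), then T_FG is continuous. -/

import Mathlib

open Set Topology Filter

/-- `seqComp f σ k` is the composition `f_{σ|k} = f_{σ₁} ∘ f_{σ₂} ∘ ⋯ ∘ f_{σ_k}`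
(with the sequence `σ` indexed from `0`). -/
def seqComp {X : Type*} {N : ℕ} (f : Fin N → X → X) (σ : ℕ → Fin N) : ℕ → X → X
  | 0 => id
  | k + 1 => seqComp f σ k ∘ f (σ k)

/-- `PiMap f σ = ⋂_{k ≥ 1} f_{σ₁} ∘ ⋯ ∘ f_{σ_k}(X)`. -/
def PiMap {X : Type*} {N : ℕ} (f : Fin N → X → X) (σ : ℕ → Fin N) : Set X :=
  ⋂ k : ℕ, seqComp f σ (k + 1) '' Set.univ

/-!
Since `σ ↦ f_{σ|k}` only depends on the first `k` letters of `σ`, and the sets `f_{σ|k}(X)` are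
compact and decrease to the point `π_F σ`, the coding maps are continuous. Restricted to the
compact set `closure Ω_F`, `π_F` is then a closed continuous surjection onto `A_F`, hence a quotient
map, and the compatibility hypothesis says exactly that `T_FG ∘ π_F = π_G` on `closure Ω_F`.
-/

open PiNat

section Coding

variable {X : Type*} {N : ℕ} (f : Fin N → X → X)

lemma seqComp_eq_of_mem_cylinder {σ ω : ℕ → Fin N} {k : ℕ} (h : ω ∈ cylinder σ k) :
    seqComp f ω k = seqComp f σ k := by
  induction k with
  | zero => rfl
  | succ k ih =>
    simp only [seqComp, ih (cylinder_anti σ k.le_succ h), mem_cylinder_iff.1 h k k.lt_succ_self]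

lemma range_seqComp_succ_subset (σ : ℕ → Fin N) (k : ℕ) :
    range (seqComp f σ (k + 1)) ⊆ range (seqComp f σ k) := by
  rw [seqComp, range_comp]
  exact image_subset_range _ _

lemma antitone_range_seqComp (σ : ℕ → Fin N) : Antitone fun k => range (seqComp f σ k) :=
  antitone_nat_of_succ_le (range_seqComp_succ_subset f σ)

lemma piMap_eq_iInter_range (σ : ℕ → Fin N) :
    PiMap f σ = ⋂ k, range (seqComp f σ (k + 1)) := by
  simp only [PiMap, image_univ]

lemma continuous_seqComp [TopologicalSpace X] (hf : ∀ i, Continuous (f i)) (σ : ℕ → Fin N) :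
    ∀ k, Continuous (seqComp f σ k)
  | 0 => continuous_id
  | k + 1 => (continuous_seqComp hf σ k).comp (hf (σ k))

theorem continuous_of_piMap_eq_singleton [TopologicalSpace X] [CompactSpace X] [T2Space X]
    (hf : ∀ i, Continuous (f i)) {π : (ℕ → Fin N) → X} (hπ : ∀ σ, PiMap f σ = {π σ}) :
    Continuous π := by
  refine continuous_iff_continuousAt.2 fun σ U hU => ?_
  have hdir : Directed (· ⊇ ·) fun k => range (seqComp f σ (k + 1)) :=
    ((antitone_range_seqComp f σ).comp_monotone fun _ _ h => Nat.succ_le_succ h).directed_ge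
  have hU' : ∀ x ∈ ⋂ k, range (seqComp f σ (k + 1)), U ∈ 𝓝 x := by
    rintro x hx
    rw [← piMap_eq_iInter_range, hπ σ, mem_singleton_iff] at hx
    exact hx ▸ hU
  obtain ⟨k, hk⟩ := exists_subset_nhds_of_isCompact hdir
    (fun k => isCompact_range (continuous_seqComp f hf σ (k + 1))) hU'
  have hcyl : cylinder σ (k + 1) ∈ 𝓝 σ :=
    (isOpen_cylinder (E := fun _ => Fin N) σ (k + 1)).mem_nhds (self_mem_cylinder σ (k + 1))
  refine mem_map.2 <| mem_of_superset hcyl fun ω hω => hk ?_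
  have hπω : π ω ∈ PiMap f ω := (hπ ω).symm ▸ mem_singleton _
  rw [piMap_eq_iInter_range] at hπω
  simpa only [seqComp_eq_of_mem_cylinder f hω] using mem_iInter.1 hπω k

end Coding

theorem fractalTransformation_continuous_general
    {X : Type*} [TopologicalSpace X] [CompactSpace X] [T2Space X]
    {Y : Type*} [TopologicalSpace Y] [CompactSpace Y] [T2Space Y]
    {N : ℕ} (f : Fin N → X → X) (hf : ∀ i, Continuous (f i))
    (g : Fin N → Y → Y) (hg : ∀ i, Continuous (g i))
    (πF : (ℕ → Fin N) → X) (hπF : ∀ σ, PiMap f σ = {πF σ})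
    (πG : (ℕ → Fin N) → Y) (hπG : ∀ σ, PiMap g σ = {πG σ})
    -- `Ω_F` is an address space for `F` with section `τ_F`:
    (ΩF : Set (ℕ → Fin N))
    (τF : Set.range πF → ΩF) (hτF : ∀ x : Set.range πF, πF (τF x) = (x : X))
    -- the compatibility hypothesis on the closure of `Ω_F`:
    (hcomp : ∀ σ ∈ closure ΩF, ∀ ω ∈ closure ΩF, πF σ = πF ω → πG σ = πG ω) :
    Continuous (fun x : Set.range πF =>
      (⟨πG (τF x), Set.mem_range_self ((τF x : ℕ → Fin N))⟩ : Set.range πG)) := by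
  have hπF_cont := continuous_of_piMap_eq_singleton f hf hπF
  have hπG_cont := continuous_of_piMap_eq_singleton g hg hπG
  have : CompactSpace (closure ΩF) := isCompact_iff_compactSpace.1 isClosed_closure.isCompact
  let q : closure ΩF → range πF := fun σ => ⟨πF σ, mem_range_self _⟩
  have hq_cont : Continuous q := (hπF_cont.comp continuous_subtype_val).subtype_mk _
  have hq_surj : Function.Surjective q := fun x =>
    ⟨⟨τF x, subset_closure (τF x).2⟩, Subtype.ext (hτF x)⟩
  have hq : IsQuotientMap q := hq_cont.isClosedMap.isQuotientMap hq_cont hq_surj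
  refine hq.continuous_iff.2 ?_
  have hT_comp_q : ∀ σ : closure ΩF, πG (τF (q σ)) = πG σ := fun σ =>
    hcomp _ (subset_closure (τF (q σ)).2) _ σ.2 (hτF (q σ))
  simp only [Function.comp_def, hT_comp_q]
  exact (hπG_cont.comp continuous_subtype_val).subtype_mk _

/-- Let `F` and `G` be point-fibred IFSs on compact Hausdorff spaces
`X`, `Y` with coding maps `π_F`, `π_G` and attractors `A_F = range π_F`,
`A_G = range π_G`, let `τ_F : A_F → Ω_F` be a section of `π_F`, and let
`T_FG = π_G ∘ τ_F`. If for all `σ, ω` in the closure of `Ω_F`,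
`π_F σ = π_F ω → π_G σ = π_G ω`, then `T_FG` is continuous. -/
theorem fractalTransformation_continuous
    {X : Type*} [TopologicalSpace X] [CompactSpace X] [T2Space X] [Nonempty X]
    {Y : Type*} [TopologicalSpace Y] [CompactSpace Y] [T2Space Y] [Nonempty Y]
    {N : ℕ} (f : Fin N → X → X) (hf : ∀ i, Continuous (f i))
    (g : Fin N → Y → Y) (hg : ∀ i, Continuous (g i))
    (πF : (ℕ → Fin N) → X) (hπF : ∀ σ, PiMap f σ = {πF σ})
    (πG : (ℕ → Fin N) → Y) (hπG : ∀ σ, PiMap g σ = {πG σ})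
    -- `Ω_F` is an address space for `F` with section `τ_F`:
    (ΩF : Set (ℕ → Fin N)) (hΩF : πF '' ΩF = Set.range πF) (hinjF : Set.InjOn πF ΩF)
    (τF : Set.range πF → ΩF) (hτF : ∀ x : Set.range πF, πF (τF x) = (x : X))
    -- the compatibility hypothesis on the closure of `Ω_F`:
    (hcomp : ∀ σ ∈ closure ΩF, ∀ ω ∈ closure ΩF, πF σ = πF ω → πG σ = πG ω) :
    Continuous (fun x : Set.range πF =>
      (⟨πG (τF x), Set.mem_range_self ((τF x : ℕ → Fin N))⟩ : Set.range πG)) :=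
  fractalTransformation_continuous_general f hf g hg πF hπF πG hπG ΩF τF hτF hcomp
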